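/- arXiv:math/0605469 — 3 statements merged into one kernel-verified Lean document; each statement's English description precedes it below -/
import Mathlib

section
/- Let X and Y be topological spaces such that Y has a countable π-base. If E ⊆ X × Y is nowhere dense in the product topology, then there is a meager set P ⊆ X such that for every x ∈ X \ P, the section E_x = {y ∈ Y : (x,y) ∈ E} is nowhere dense in Y. -/
open Set

/-- `Q` is a π-base: a family of nonempty open sets such that every nonempty
open set contains a member of the family. -/
def IsPiBase (X : Type*) [TopologicalSpace X] (Q : Set (Set X)) : Prop :=
  (∀ U ∈ Q, IsOpen U ∧ U.Nonempty) ∧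
  ∀ V : Set X, IsOpen V → V.Nonempty → ∃ U ∈ Q, U ⊆ V

/-- Kuratowski–Ulam theorem for nowhere dense sets: if `Y` has a countable
π-base and `E ⊆ X × Y` is nowhere dense, then outside a meager set of `x ∈ X`
the section `E_x` is nowhere dense in `Y`. -/
theorem kuratowski_ulam_nowhereDense {X Y : Type*} [TopologicalSpace X]
    [TopologicalSpace Y] (hY : ∃ Q : Set (Set Y), Q.Countable ∧ IsPiBase Y Q)
    (E : Set (X × Y)) (hE : IsNowhereDense E) :
    ∃ P : Set X, IsMeagre P ∧
      ∀ x ∈ (Set.univ : Set X) \ P, IsNowhereDense {y : Y | (x, y) ∈ E} := by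
  obtain ⟨Q, hQc, hQopen, hQbase⟩ := hY
  set F : Set (X × Y) := closure E with hF
  have hFclosed : IsClosed F := isClosed_closure
  have hFint : interior F = ∅ := hE
  -- bad set for each V ∈ Q
  set A : Set Y → Set X := fun V => {x : X | ∀ y ∈ V, (x, y) ∈ F} with hA
  have hAclosed : ∀ V, IsClosed (A V) := by
    intro V
    have : A V = ⋂ y ∈ V, {x : X | (x, y) ∈ F} := by
      ext x; simp [hA]
    rw [this]
    exact isClosed_biInter fun y _ =>
      hFclosed.preimage (continuous_id.prodMk continuous_const)
  have hAnd : ∀ V ∈ Q, IsNowhereDense (A V) := by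
    intro V hV
    rw [(hAclosed V).isNowhereDense_iff]
    by_contra h
    obtain ⟨x, hx⟩ := nonempty_iff_ne_empty.2 h
    have hopen : IsOpen (interior (A V) ×ˢ V) :=
      isOpen_interior.prod (hQopen V hV).1
    have hsub : interior (A V) ×ˢ V ⊆ F := by
      rintro ⟨a, b⟩ ⟨ha, hb⟩
      exact interior_subset ha b hb
    obtain ⟨y, hy⟩ := (hQopen V hV).2
    have : (x, y) ∈ interior F :=
      interior_maximal hsub hopen ⟨hx, hy⟩
    rw [hFint] at this
    exact this
  refine ⟨⋃ V ∈ Q, A V, ?_, ?_⟩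
  · rw [isMeagre_iff_countable_union_isNowhereDense]
    refine ⟨A '' Q, ?_, hQc.image A, ?_⟩
    · rintro t ⟨V, hV, rfl⟩; exact hAnd V hV
    · rw [sUnion_image]
  · rintro x ⟨-, hx⟩
    simp only [mem_iUnion, not_exists] at hx
    have hsec : IsNowhereDense {y : Y | (x, y) ∈ F} := by
      have hcl : IsClosed {y : Y | (x, y) ∈ F} :=
        hFclosed.preimage (continuous_const.prodMk continuous_id)
      rw [hcl.isNowhereDense_iff]
      rw [eq_empty_iff_forall_notMem]
      intro y hy
      have hWo : IsOpen (interior {y : Y | (x, y) ∈ F}) := isOpen_interior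
      obtain ⟨V, hV, hVsub⟩ := hQbase _ hWo ⟨y, hy⟩
      exact hx V hV fun z hz => interior_subset (s := {y : Y | (x, y) ∈ F}) (hVsub hz)
    have hsub : {y : Y | (x, y) ∈ E} ⊆ {y : Y | (x, y) ∈ F} := fun y hy => subset_closure hy
    unfold IsNowhereDense at hsec ⊢
    exact eq_empty_of_subset_empty (hsec ▸ interior_mono (closure_mono hsub))
end

section
/- Let X and Y be topological spaces such that Y has a countable π-base. If E ⊆ X × Y is meager in the product topology, then there is a meager set P ⊆ X such that for every x ∈ X \ P, the section E_x = {y ∈ Y : (x,y) ∈ E} is meager in Y. -/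
open Set

/-- Kuratowski–Ulam theorem: if `Y` has a countable π-base and `E ⊆ X × Y` is
meager, then outside a meager set of `x ∈ X` the section `E_x` is meager. -/
theorem kuratowski_ulam_meagre {X Y : Type*} [TopologicalSpace X]
    [TopologicalSpace Y] (hY : ∃ Q : Set (Set Y), Q.Countable ∧ IsPiBase Y Q)
    (E : Set (X × Y)) (hE : IsMeagre E) :
    ∃ P : Set X, IsMeagre P ∧
      ∀ x ∈ (Set.univ : Set X) \ P, IsMeagre {y : Y | (x, y) ∈ E} := by
  obtain ⟨Q, hQc, hQopen, hQbase⟩ := hY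
  obtain ⟨S, hSnd, hSc, hSE⟩ := isMeagre_iff_countable_union_isNowhereDense.mp hE
  -- For t ∈ S and U ∈ Q, the set of x whose section of (closure t)ᶜ meets U
  set A : Set (X × Y) → Set Y → Set X :=
    fun t U => {x | ∃ y ∈ U, (x, y) ∈ (closure t)ᶜ} with hA
  have hAopen : ∀ t, ∀ U ∈ Q, IsOpen (A t U) := by
    intro t U hU
    have : A t U = Prod.fst '' ((closure t)ᶜ ∩ univ ×ˢ U) := by
      ext x
      simp only [hA, mem_setOf_eq, mem_image, mem_inter_iff, mem_prod, mem_univ, true_and]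
      constructor
      · rintro ⟨y, hyU, hy⟩; exact ⟨(x, y), ⟨hy, hyU⟩, rfl⟩
      · rintro ⟨⟨a, b⟩, ⟨hab, hbU⟩, rfl⟩; exact ⟨b, hbU, hab⟩
    rw [this]
    exact isOpenMap_fst _ (isClosed_closure.isOpen_compl.inter
      (isOpen_univ.prod (hQopen U hU).1))
  have hAdense : ∀ t ∈ S, ∀ U ∈ Q, Dense (A t U) := by
    intro t ht U hU
    rw [dense_iff_inter_open]
    intro V hV hVne
    have hWdense : Dense ((closure t)ᶜ) :=
      (isClosed_isNowhereDense_iff_compl.mp ⟨isClosed_closure, (hSnd t ht).closure⟩).2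
    have hVU : IsOpen (V ×ˢ U) := hV.prod (hQopen U hU).1
    have hVUne : (V ×ˢ U).Nonempty := hVne.prod (hQopen U hU).2
    obtain ⟨⟨x, y⟩, ⟨hxV, hyU⟩, hxy⟩ := hWdense.inter_open_nonempty _ hVU hVUne
    exact ⟨x, hxV, y, hyU, hxy⟩
  set G : Set X := ⋂ t ∈ S, ⋂ U ∈ Q, A t U with hG
  refine ⟨Gᶜ, ?_, ?_⟩
  · rw [IsMeagre, compl_compl]
    refine (countable_bInter_mem hSc).mpr fun t ht => ?_
    refine (countable_bInter_mem hQc).mpr fun U hU => ?_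
    exact residual_of_dense_open (hAopen t U hU) (hAdense t ht U hU)
  · rintro x ⟨-, hx⟩
    rw [mem_compl_iff, not_not, hG] at hx
    simp only [mem_iInter] at hx
    rw [isMeagre_iff_countable_union_isNowhereDense]
    refine ⟨(fun t => {y : Y | (x, y) ∈ closure t}) '' S, ?_, hSc.image _, ?_⟩
    · rintro s ⟨t, ht, rfl⟩
      have hclosed : IsClosed {y : Y | (x, y) ∈ closure t} :=
        isClosed_closure.preimage (Continuous.prodMk_right x)
      rw [hclosed.isNowhereDense_iff, ← subset_empty_iff]
      intro y hy
      -- the complement section is dense since it meets every π-base element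
      have hdense : Dense {y : Y | (x, y) ∈ (closure t)ᶜ} := by
        rw [dense_iff_inter_open]
        intro V hV hVne
        obtain ⟨U, hU, hUV⟩ := hQbase V hV hVne
        obtain ⟨y', hy'U, hy'⟩ := hx t ht U hU
        exact ⟨y', hUV hy'U, hy'⟩
      obtain ⟨y', hy'1, hy'2⟩ := hdense.inter_open_nonempty _ isOpen_interior ⟨y, hy⟩
      exact hy'2 (interior_subset (s := {y : Y | (x, y) ∈ closure t}) hy'1)
    · intro y hy
      obtain ⟨t, ht, hyt⟩ := hSE hy
      exact ⟨_, ⟨t, ht, rfl⟩, subset_closure hyt⟩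
end

section
/- If E ⊆ X × Y is open and dense in the product topology, then for any nonempty open U ⊆ X and nonempty open V_1,…,V_n ⊆ Y there exist nonempty open U* ⊆ U and nonempty open V_i* ⊆ V_i (1 ≤ i ≤ n) such that U* × V_i* ⊆ E for every i. -/
open Set

/-- If `E ⊆ X × Y` is open and dense, then for any nonempty open `U ⊆ X` and
nonempty open `V₁,…,Vₙ ⊆ Y` there are nonempty open `U* ⊆ U` and nonempty open
`Vᵢ* ⊆ Vᵢ` with `U* × Vᵢ* ⊆ E` for every `i`. -/
theorem openDense_shrink {X Y : Type*} [TopologicalSpace X] [TopologicalSpace Y]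
    (E : Set (X × Y)) (hEo : IsOpen E) (hEd : Dense E)
    (U : Set X) (hU : IsOpen U) (hUne : U.Nonempty)
    (n : ℕ) (V : Fin n → Set Y) (hV : ∀ i, IsOpen (V i) ∧ (V i).Nonempty) :
    ∃ U' : Set X, ∃ V' : Fin n → Set Y,
      IsOpen U' ∧ U'.Nonempty ∧ U' ⊆ U ∧
      (∀ i, IsOpen (V' i) ∧ (V' i).Nonempty ∧ V' i ⊆ V i) ∧
      ∀ i, U' ×ˢ V' i ⊆ E := by
  induction n generalizing U with
  | zero =>
    exact ⟨U, fun i => i.elim0, hU, hUne, subset_rfl, fun i => i.elim0, fun i => i.elim0⟩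
  | succ n ih =>
    obtain ⟨U', V'', hU'o, hU'ne, hU'sub, hV'', hprod⟩ :=
      ih U hU hUne (fun i => V i.castSucc) (fun i => hV i.castSucc)
    -- intersect U' × V (last n) with E
    have hlast := hV (Fin.last n)
    have hopen : IsOpen (U' ×ˢ V (Fin.last n)) := hU'o.prod hlast.1
    have hne : (U' ×ˢ V (Fin.last n)).Nonempty := hU'ne.prod hlast.2
    obtain ⟨⟨x, y⟩, hmem, hE⟩ := hEd.inter_open_nonempty _ hopen hne
    obtain ⟨A, B, hA, hB, hxA, hyB, hAB⟩ := (isOpen_prod_iff.mp hEo) x y hE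
    refine ⟨U' ∩ A, fun i => if h : i = Fin.last n then V (Fin.last n) ∩ B else
      V'' (i.castPred h), (hU'o.inter hA), ⟨x, hmem.1, hxA⟩,
      (inter_subset_left).trans hU'sub, ?_, ?_⟩
    · intro i
      by_cases h : i = Fin.last n
      · subst h
        simp only [dif_pos]
        exact ⟨hlast.1.inter hB, ⟨y, hmem.2, hyB⟩, inter_subset_left⟩
      · simp only [dif_neg h]
        obtain ⟨h1, h2, h3⟩ := hV'' (i.castPred h)
        refine ⟨h1, h2, ?_⟩
        simpa using h3
    · intro i
      by_cases h : i = Fin.last n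
      · subst h
        simp only [dif_pos]
        intro p hp
        exact hAB ⟨hp.1.2, hp.2.2⟩
      · simp only [dif_neg h]
        intro p hp
        exact hprod (i.castPred h) ⟨hp.1.1, hp.2⟩
end
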